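/- arXiv:math/0502203 — 2 statements merged into one kernel-verified Lean document; each statement's English description precedes it below -/
import Mathlib

section
/- Let s(x) be a formal power series with s(0) = s_0 ≠ 0 over a field of characteristic zero, and let q(t) be the unique formal power series with q(0) = 0 satisfying q(t) = t·s(q(t)). Then for every k ≥ 0 and n ≥ k+1, [t^n](q(t)^{k+1}) = ((k+1)/n)·[x^{n-k-1}](s(x)^n). -/
open PowerSeries

/-- Composition (substitution) of formal power series: `pcomp f g = f ∘ g`. -/
noncomputable def pcomp {K : Type*} [CommRing K] (f g : PowerSeries K) : PowerSeries K :=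
  PowerSeries.mk fun n => ∑ k ∈ Finset.range (n + 1),
    PowerSeries.coeff (R := K) k f * PowerSeries.coeff (R := K) n (g ^ k)

section aux
variable {K : Type*} [CommRing K]

lemma coeff_pow_eq_zero' {q : PowerSeries K} (hq0 : constantCoeff (R := K) q = 0)
    {n k : ℕ} (h : n < k) : coeff (R := K) n (q ^ k) = 0 := by
  obtain ⟨r, hr⟩ := X_dvd_iff.mpr hq0
  rw [hr, mul_pow, coeff_X_pow_mul', if_neg (by omega)]

lemma coeff_aeval' {q : PowerSeries K} (hq0 : constantCoeff (R := K) q = 0)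
    (P : Polynomial K) (n : ℕ) :
    coeff (R := K) n (Polynomial.aeval q P) =
      ∑ k ∈ Finset.range (n + 1), P.coeff k * coeff (R := K) n (q ^ k) := by
  have h1 : coeff (R := K) n (Polynomial.aeval q P)
      = ∑ k ∈ P.support, P.coeff k * coeff (R := K) n (q ^ k) := by
    rw [Polynomial.aeval_def, Polynomial.eval₂_eq_sum, Polynomial.sum, map_sum]
    refine Finset.sum_congr rfl fun k _ => ?_
    simp [Algebra.algebraMap_self_apply, PowerSeries.algebraMap_apply, coeff_C_mul]
  have e1 : ∑ k ∈ P.support, P.coeff k * coeff (R := K) n (q ^ k)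
      = ∑ k ∈ P.support ∪ Finset.range (n + 1), P.coeff k * coeff (R := K) n (q ^ k) :=
    Finset.sum_subset Finset.subset_union_left (fun k _ hk => by
      rw [Polynomial.notMem_support_iff.mp hk, zero_mul])
  have e2 : ∑ k ∈ Finset.range (n + 1), P.coeff k * coeff (R := K) n (q ^ k)
      = ∑ k ∈ P.support ∪ Finset.range (n + 1), P.coeff k * coeff (R := K) n (q ^ k) :=
    Finset.sum_subset Finset.subset_union_right (fun k _ hk => by
      rw [coeff_pow_eq_zero' hq0 (by simpa using hk), mul_zero])
  rw [h1, e1, e2]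

lemma coeff_pcomp_eq_aeval' {q : PowerSeries K} (hq0 : constantCoeff (R := K) q = 0)
    (f : PowerSeries K) {n N : ℕ} (h : n < N) :
    coeff (R := K) n (pcomp f q) = coeff (R := K) n (Polynomial.aeval q (trunc N f)) := by
  rw [coeff_aeval' hq0, pcomp, coeff_mk]
  refine Finset.sum_congr rfl fun k hk => ?_
  rw [coeff_trunc, if_pos (by have := Finset.mem_range.mp hk; omega)]

lemma pcomp_mul' {q : PowerSeries K} (hq0 : constantCoeff (R := K) q = 0) (f g : PowerSeries K) :
    pcomp (f * g) q = pcomp f q * pcomp g q := by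
  ext n
  rw [coeff_mul]
  have hc : ∀ p ∈ Finset.HasAntidiagonal.antidiagonal n,
      coeff (R := K) p.1 (pcomp f q) * coeff (R := K) p.2 (pcomp g q)
      = coeff (R := K) p.1 (Polynomial.aeval q (trunc (n + 1) f)) *
        coeff (R := K) p.2 (Polynomial.aeval q (trunc (n + 1) g)) := by
    intro p hp
    have := Finset.HasAntidiagonal.mem_antidiagonal.mp hp
    rw [coeff_pcomp_eq_aeval' hq0 f (N := n + 1) (by omega),
      coeff_pcomp_eq_aeval' hq0 g (N := n + 1) (by omega)]
  rw [Finset.sum_congr rfl hc, ← PowerSeries.coeff_mul, ← map_mul,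
    coeff_pcomp_eq_aeval' hq0 (f * g) (Nat.lt_succ_self n),
    coeff_aeval' hq0, coeff_aeval' hq0]
  refine Finset.sum_congr rfl fun k hk => ?_
  have hk' : k ≤ n := by have := Finset.mem_range.mp hk; omega
  congr 1
  rw [Polynomial.coeff_mul, PowerSeries.coeff_trunc, if_pos (by omega),
    PowerSeries.coeff_mul]
  refine Finset.sum_congr rfl fun p hp => ?_
  have := Finset.HasAntidiagonal.mem_antidiagonal.mp hp
  rw [PowerSeries.coeff_trunc, PowerSeries.coeff_trunc, if_pos (by omega), if_pos (by omega)]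

lemma pcomp_one' (q : PowerSeries K) : pcomp 1 q = 1 := by
  ext n
  rw [pcomp, coeff_mk]
  rw [Finset.sum_eq_single 0]
  · simp
  · intro k _ hk
    rw [PowerSeries.coeff_one, if_neg hk, zero_mul]
  · intro h
    exact absurd (Finset.mem_range.mpr (by omega)) h

lemma pcomp_pow' {q : PowerSeries K} (hq0 : constantCoeff (R := K) q = 0) (f : PowerSeries K) :
    ∀ j : ℕ, pcomp (f ^ j) q = (pcomp f q) ^ j
  | 0 => by rw [pow_zero, pow_zero, pcomp_one']
  | (j + 1) => by rw [pow_succ, pow_succ, pcomp_mul' hq0, pcomp_pow' hq0 f j]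

lemma coeff_X_mul_deriv (f : PowerSeries K) (n : ℕ) :
    coeff (R := K) n (X * d⁄dX K f) = n * coeff (R := K) n f := by
  cases n with
  | zero => simp
  | succ n => rw [coeff_succ_X_mul, coeff_derivative]; push_cast; ring

lemma coeff_X_mul_deriv_mul (f g : PowerSeries K) (m : ℕ) :
    coeff (R := K) m (X * d⁄dX K f * g) =
      ∑ j ∈ Finset.range (m + 1), (j : K) * coeff (R := K) j f * coeff (R := K) (m - j) g := by
  rw [PowerSeries.coeff_mul, Finset.Nat.sum_antidiagonal_eq_sum_range_succ_mk]
  refine Finset.sum_congr rfl fun j _ => ?_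
  rw [coeff_X_mul_deriv]

lemma key_sym' (s : PowerSeries K) {a b : ℕ} (ha : 1 ≤ a) (hb : 1 ≤ b) :
    (b : K) • (X * d⁄dX K (s ^ a) * s ^ b) = (a : K) • (X * d⁄dX K (s ^ b) * s ^ a) := by
  have h : ∀ c : ℕ, ∀ e : ℕ,
      X * d⁄dX K (s ^ c) * s ^ e = (c : K) • (X * d⁄dX K s * s ^ (c - 1 + e)) := by
    intro c e
    rw [Derivation.leibniz_pow, pow_add, nsmul_eq_mul, smul_eq_C_mul,
      show ((c : ℕ) : K⟦X⟧) = C (R := K) ((c : ℕ) : K) by push_cast; rfl]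
    simp only [smul_eq_mul]
    ring
  rw [h a b, h b a, smul_smul, smul_smul, show a - 1 + b = b - 1 + a by omega, mul_comm]

end aux

/-- Lagrange inversion for powers: if `q(0) = 0` and `q = t·s(q)` with `s(0) ≠ 0`, then
for `k ≥ 0` and `n ≥ k+1`, `[t^n](q^{k+1}) = ((k+1)/n)·[x^{n-k-1}](s^n)`. -/
theorem lagrange_powers {K : Type*} [Field K] [CharZero K]
    (s q : PowerSeries K)
    (hs : PowerSeries.constantCoeff (R := K) s ≠ 0)
    (hq0 : PowerSeries.constantCoeff (R := K) q = 0)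
    (hq : q = PowerSeries.X * pcomp s q) :
    ∀ k n : ℕ, k + 1 ≤ n →
      PowerSeries.coeff (R := K) n (q ^ (k + 1)) =
        ((k : K) + 1) / (n : K) * PowerSeries.coeff (R := K) (n - k - 1) (s ^ n) := by
  have hpow : ∀ j : ℕ, q ^ j = X ^ j * pcomp (s ^ j) q := by
    intro j
    rw [pcomp_pow' hq0, ← mul_pow, ← hq]
  intro k n
  induction n using Nat.strong_induction_on generalizing k with
  | _ n IH =>
    intro hkn
    set m := n - (k + 1) with hm
    have hn : n = m + (k + 1) := by omega
    have hA : coeff (R := K) n (q ^ (k + 1)) =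
        ∑ j ∈ Finset.range (m + 1), coeff (R := K) j (s ^ (k + 1)) * coeff (R := K) m (q ^ j) := by
      rw [hpow (k + 1), hn, coeff_X_pow_mul, pcomp, coeff_mk]
    have hnk : n - k - 1 = m := by omega
    rw [hnk]
    by_cases hm0 : m = 0
    · have hnk1 : n = k + 1 := by omega
      rw [hm0] at hA
      rw [hm0, hA]
      simp only [Finset.range_one, Finset.sum_singleton, pow_zero, map_one,
        PowerSeries.coeff_zero_eq_constantCoeff, coeff_one]
      rw [hnk1]
      have : ((k : K) + 1) ≠ 0 := by
        have := Nat.cast_ne_zero (R := K).mpr (Nat.succ_ne_zero k)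
        push_cast at this; exact this
      rw [show ((k + 1 : ℕ) : K) = (k : K) + 1 by push_cast; ring] at *
      rw [div_self this, one_mul]
      simp
    · -- m ≥ 1
      have hm1 : 1 ≤ m := by omega
      have hmK : (m : K) ≠ 0 := Nat.cast_ne_zero.mpr hm0
      have hnK : (n : K) ≠ 0 := Nat.cast_ne_zero.mpr (by omega)
      -- rewrite each term via the induction hypothesis
      have hB : coeff (R := K) n (q ^ (k + 1)) =
          ∑ j ∈ Finset.range (m + 1),
            coeff (R := K) j (s ^ (k + 1)) * ((j : K) / (m : K) * coeff (R := K) (m - j) (s ^ m)) := by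
        rw [hA]
        refine Finset.sum_congr rfl fun j hj => ?_
        have hjm : j ≤ m := by have := Finset.mem_range.mp hj; omega
        cases j with
        | zero => simp [coeff_one, hm0]
        | succ j' =>
          have := IH m (by omega) j' (by omega)
          rw [this, show m - j' - 1 = m - (j' + 1) by omega]
          push_cast
          ring_nf
      set S := coeff (R := K) m (X * d⁄dX K (s ^ (k + 1)) * s ^ m) with hS
      set S' := coeff (R := K) m (X * d⁄dX K (s ^ m) * s ^ (k + 1)) with hS'
      have hBS : coeff (R := K) n (q ^ (k + 1)) = (1 / (m : K)) * S := by
        rw [hB, hS, coeff_X_mul_deriv_mul, Finset.mul_sum]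
        refine Finset.sum_congr rfl fun j _ => by ring
      have h1 : (m : K) * S = ((k : K) + 1) * S' := by
        have := key_sym' (K := K) s (a := k + 1) (b := m) (by omega) hm1
        have h2 := congrArg (coeff (R := K) m) this
        rw [map_smul, map_smul, smul_eq_mul, smul_eq_mul] at h2
        rw [hS, hS']
        rw [show ((k + 1 : ℕ) : K) = (k : K) + 1 by push_cast; ring] at h2
        exact h2
      have h2 : S + S' = (m : K) * coeff (R := K) m (s ^ n) := by
        have hd : X * d⁄dX K (s ^ n) =
            X * d⁄dX K (s ^ (k + 1)) * s ^ m + X * d⁄dX K (s ^ m) * s ^ (k + 1) := by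
          rw [hn, pow_add, Derivation.leibniz]
          simp only [smul_eq_mul]
          ring
        have := coeff_X_mul_deriv (K := K) (s ^ n) m
        rw [hd, map_add] at this
        rw [hS, hS', this]
      have hcast : (n : K) = (m : K) + ((k : K) + 1) := by rw [hn]; push_cast; ring
      have h3 : (n : K) * S = ((k : K) + 1) * ((m : K) * coeff (R := K) m (s ^ n)) := by
        linear_combination ((k : K) + 1) * h2 + h1 + S * hcast
      rw [hBS]
      field_simp
      linear_combination h3
end

section
/- For every τ in the base field, the set 𝒮𝒢(τ) = {(A, x·A^τ) : A ∈ 1 + xK[[x]]} is a subgroup of the group 𝒮ℐ = 𝒮𝒰 ⋊ 𝒮𝒟 with multiplication (A,α)(B,β) = (A·(B∘α), β∘α), where A^τ := exp(τ·log A) using the formal logarithm of series with constant term 1. -/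
open PowerSeries

/-- The formal logarithm `log A` of a power series `A` with constant term `1`:
`log A = Σ_{n≥1} (−1)^{n+1}(A−1)^n/n`. -/
noncomputable def plog {K : Type*} [Field K] [CharZero K] (A : PowerSeries K) :
    PowerSeries K :=
  pcomp (PowerSeries.mk fun n => (-1 : K) ^ (n + 1) / (n : K)) (A - 1)

/-- The formal power `A^τ = exp(τ·log A)` for `A` with constant term `1`. -/
noncomputable def ppow {K : Type*} [Field K] [CharZero K] (τ : K) (A : PowerSeries K) :
    PowerSeries K :=
  pcomp (PowerSeries.exp K) (τ • plog A)

/-- The product of the semidirect product `𝒮𝒰 ⋊ 𝒮𝒟`: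
`(A,α)(B,β) = (A·(B∘α), β∘α)`. -/
noncomputable def simul {K : Type*} [CommRing K]
    (p q : PowerSeries K × PowerSeries K) : PowerSeries K × PowerSeries K :=
  (p.1 * pcomp q.1 p.2, pcomp q.2 p.2)

namespace SGaux

open Finset Polynomial

set_option linter.unusedSectionVars false

variable {K : Type*} [Field K] [CharZero K]

theorem coeff_pcomp (f g : PowerSeries K) (n : ℕ) :
    coeff (R := K) n (pcomp f g) = ∑ k ∈ range (n + 1), coeff (R := K) k f * coeff (R := K) n (g ^ k) := by
  simp [pcomp]

theorem constantCoeff_pcomp (f g : PowerSeries K) :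
    constantCoeff (R := K) (pcomp f g) = constantCoeff (R := K) f := by
  have h := coeff_pcomp f g 0
  simpa [coeff_zero_eq_constantCoeff] using h

theorem coeff_pow_of_lt {g : PowerSeries K} (hg : constantCoeff (R := K) g = 0) {n k : ℕ}
    (h : n < k) : coeff (R := K) n (g ^ k) = 0 := by
  have hdvd : (PowerSeries.X : PowerSeries K) ^ k ∣ g ^ k :=
    pow_dvd_pow_of_dvd (PowerSeries.X_dvd_iff.mpr hg) k
  exact PowerSeries.X_pow_dvd_iff.mp hdvd n h

theorem coeff_pcomp_of_lt {g : PowerSeries K} (hg : constantCoeff (R := K) g = 0)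
    (f : PowerSeries K) {n N : ℕ} (hn : n < N) :
    coeff (R := K) n (pcomp f g) = ∑ k ∈ range N, coeff (R := K) k f * coeff (R := K) n (g ^ k) := by
  rw [coeff_pcomp]
  refine Finset.sum_subset (by simpa [Nat.succ_le_iff] using hn) ?_
  intro k hk hk'
  have hnk : n < k := by
    simp only [mem_range, not_lt] at hk'
    omega
  rw [coeff_pow_of_lt hg hnk, mul_zero]

theorem coeff_pcomp_congr {f f' : PowerSeries K} (g : PowerSeries K) {n : ℕ}
    (h : ∀ k ≤ n, coeff (R := K) k f = coeff (R := K) k f') :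
    coeff (R := K) n (pcomp f g) = coeff (R := K) n (pcomp f' g) := by
  rw [coeff_pcomp, coeff_pcomp]
  refine Finset.sum_congr rfl fun k hk => ?_
  rw [h k (by simpa [Nat.lt_succ_iff] using hk)]

theorem coeff_pcomp_eq_aeval {g : PowerSeries K} (hg : constantCoeff (R := K) g = 0)
    (f : PowerSeries K) {n N : ℕ} (hn : n < N) :
    coeff (R := K) n (pcomp f g) = coeff (R := K) n (Polynomial.aeval g (trunc N f)) := by
  obtain ⟨M, rfl⟩ : ∃ M, N = M + 1 := ⟨N - 1, by omega⟩
  rw [Polynomial.aeval_eq_sum_range' (natDegree_trunc_lt f M) g, coeff_pcomp_of_lt hg f hn,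
    map_sum]
  refine Finset.sum_congr rfl fun k hk => ?_
  rw [PowerSeries.coeff_smul, PowerSeries.coeff_trunc, if_pos (mem_range.mp hk),
    smul_eq_mul]

theorem coeff_aeval_congr {g : PowerSeries K} (hg : constantCoeff (R := K) g = 0)
    {P Q : Polynomial K} {N : ℕ} (h : ∀ d < N, P.coeff d = Q.coeff d) {n : ℕ} (hn : n < N) :
    coeff (R := K) n (Polynomial.aeval g P) = coeff (R := K) n (Polynomial.aeval g Q) := by
  obtain ⟨R, hR⟩ : (Polynomial.X : Polynomial K) ^ N ∣ P - Q :=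
    Polynomial.X_pow_dvd_iff.mpr (fun d hd => by simp [h d hd])
  have key : Polynomial.aeval g P - Polynomial.aeval g Q = g ^ N * Polynomial.aeval g R := by
    rw [← map_sub, hR, map_mul, map_pow, Polynomial.aeval_X]
  have hz : coeff (R := K) n (g ^ N * Polynomial.aeval g R) = 0 := by
    rw [PowerSeries.coeff_mul]
    refine Finset.sum_eq_zero fun x hx => ?_
    have hx1 : x.1 ≤ n := by
      have := Finset.HasAntidiagonal.mem_antidiagonal.mp hx
      omega
    rw [coeff_pow_of_lt hg (lt_of_le_of_lt hx1 hn), zero_mul]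
  have := congrArg (PowerSeries.coeff (R := K) n) key
  rw [map_sub, hz, sub_eq_zero] at this
  exact this

theorem pcomp_C (c : K) (g : PowerSeries K) : pcomp (PowerSeries.C (R := K) c) g = PowerSeries.C (R := K) c := by
  ext n
  rw [coeff_pcomp]
  rw [Finset.sum_eq_single 0]
  · simp [PowerSeries.coeff_C, PowerSeries.coeff_one]
  · intro k _ hk
    simp [PowerSeries.coeff_C, hk]
  · simp

theorem pcomp_one (g : PowerSeries K) : pcomp 1 g = 1 := by
  simpa [map_one] using pcomp_C (1 : K) g

theorem pcomp_add (f₁ f₂ g : PowerSeries K) :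
    pcomp (f₁ + f₂) g = pcomp f₁ g + pcomp f₂ g := by
  ext n
  simp [coeff_pcomp, add_mul, Finset.sum_add_distrib]

theorem pcomp_smul (c : K) (f g : PowerSeries K) :
    pcomp (c • f) g = c • pcomp f g := by
  ext n
  simp [coeff_pcomp, Finset.mul_sum, mul_assoc]

theorem pcomp_sub (f₁ f₂ g : PowerSeries K) :
    pcomp (f₁ - f₂) g = pcomp f₁ g - pcomp f₂ g := by
  ext n
  simp [coeff_pcomp, sub_mul, Finset.sum_sub_distrib]

theorem pcomp_mul {g : PowerSeries K} (hg : constantCoeff (R := K) g = 0) (f₁ f₂ : PowerSeries K) :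
    pcomp (f₁ * f₂) g = pcomp f₁ g * pcomp f₂ g := by
  ext n
  have hn : n < n + 1 := lt_add_one n
  rw [coeff_pcomp_eq_aeval hg (f₁ * f₂) hn]
  rw [coeff_aeval_congr hg (P := trunc (n+1) (f₁ * f₂)) (Q := trunc (n+1) f₁ * trunc (n+1) f₂)
    ?_ hn]
  · rw [map_mul, PowerSeries.coeff_mul, PowerSeries.coeff_mul]
    refine Finset.sum_congr rfl fun x hx => ?_
    have hmem := Finset.HasAntidiagonal.mem_antidiagonal.mp hx
    have h1 : x.1 < n + 1 := by omega
    have h2 : x.2 < n + 1 := by omega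
    rw [← coeff_pcomp_eq_aeval hg f₁ h1, ← coeff_pcomp_eq_aeval hg f₂ h2]
  · intro d hd
    rw [PowerSeries.coeff_trunc, if_pos hd, Polynomial.coeff_mul, PowerSeries.coeff_mul]
    refine Finset.sum_congr rfl fun x hx => ?_
    have hmem := Finset.HasAntidiagonal.mem_antidiagonal.mp hx
    rw [PowerSeries.coeff_trunc, PowerSeries.coeff_trunc, if_pos (by omega), if_pos (by omega)]

theorem pcomp_pow {g : PowerSeries K} (hg : constantCoeff (R := K) g = 0) (f : PowerSeries K) (k : ℕ) :
    pcomp (f ^ k) g = pcomp f g ^ k := by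
  induction k with
  | zero => simpa using pcomp_one g
  | succ k ih => rw [pow_succ, pcomp_mul hg, ih, pow_succ]

theorem pcomp_X {g : PowerSeries K} (hg : constantCoeff (R := K) g = 0) :
    pcomp PowerSeries.X g = g := by
  ext n
  rw [coeff_pcomp]
  rw [Finset.sum_eq_single 1]
  · cases n with
    | zero => simp [PowerSeries.coeff_X, coeff_zero_eq_constantCoeff, hg]
    | succ m => simp [PowerSeries.coeff_X]
  · intro k _ hk
    simp [PowerSeries.coeff_X, hk]
  · intro h
    have : n = 0 := by simpa [Nat.lt_succ_iff] using h
    subst this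
    simpa [PowerSeries.coeff_X, coeff_zero_eq_constantCoeff] using hg

theorem pcomp_X_right (f : PowerSeries K) : pcomp f PowerSeries.X = f := by
  ext n
  rw [coeff_pcomp]
  rw [Finset.sum_eq_single n]
  · simp [PowerSeries.coeff_X_pow]
  · intro k _ hk
    simp [PowerSeries.coeff_X_pow, Ne.symm hk]
  · intro h
    exact absurd (self_mem_range_succ n) h

theorem pcomp_zero_right (f : PowerSeries K) :
    pcomp f 0 = PowerSeries.C (R := K) (constantCoeff (R := K) f) := by
  ext n
  rw [coeff_pcomp]
  rw [Finset.sum_eq_single 0]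
  · simp [PowerSeries.coeff_C, PowerSeries.coeff_one, coeff_zero_eq_constantCoeff]
  · intro k _ hk
    rw [zero_pow hk, map_zero, mul_zero]
  · simp

theorem pcomp_aeval {h : PowerSeries K} (hh : constantCoeff (R := K) h = 0)
    (g : PowerSeries K) (P : Polynomial K) :
    pcomp (Polynomial.aeval g P) h = Polynomial.aeval (pcomp g h) P := by
  induction P using Polynomial.induction_on' with
  | add p q hp hq => rw [map_add, pcomp_add, hp, hq, map_add]
  | monomial m a =>
    rw [Polynomial.aeval_monomial, Polynomial.aeval_monomial]
    rw [← PowerSeries.C_eq_algebraMap, pcomp_mul hh, pcomp_pow hh, pcomp_C]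

theorem pcomp_assoc {g h : PowerSeries K} (hg : constantCoeff (R := K) g = 0)
    (hh : constantCoeff (R := K) h = 0) (f : PowerSeries K) :
    pcomp (pcomp f g) h = pcomp f (pcomp g h) := by
  have hgh : constantCoeff (R := K) (pcomp g h) = 0 := by rw [constantCoeff_pcomp, hg]
  ext n
  rw [coeff_pcomp_congr h (f' := Polynomial.aeval g (trunc (n+1) f))
    (fun k hk => coeff_pcomp_eq_aeval hg f (Nat.lt_succ_of_le hk)),
    pcomp_aeval hh, ← coeff_pcomp_eq_aeval hgh f (lt_add_one n)]

theorem derivative_pcomp {g : PowerSeries K} (hg : constantCoeff (R := K) g = 0)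
    (f : PowerSeries K) :
    d⁄dX K (pcomp f g) = pcomp (d⁄dX K f) g * d⁄dX K g := by
  ext n
  rw [PowerSeries.coeff_derivative, coeff_pcomp]
  have hu : coeff (R := K) n (pcomp (d⁄dX K f) g * d⁄dX K g)
      = coeff (R := K) n ((∑ k ∈ range (n + 1), PowerSeries.C (R := K) (coeff (R := K) k (d⁄dX K f)) * g ^ k) * d⁄dX K g) := by
    rw [PowerSeries.coeff_mul, PowerSeries.coeff_mul]
    refine Finset.sum_congr rfl fun x hx => ?_
    have hmem := Finset.HasAntidiagonal.mem_antidiagonal.mp hx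
    have h1 : x.1 < n + 1 := by omega
    rw [coeff_pcomp_of_lt hg _ h1]
    congr 1
    rw [map_sum]
    refine Finset.sum_congr rfl fun k _ => ?_
    rw [PowerSeries.coeff_C_mul]
  rw [hu]
  have key : ∀ k : ℕ, ((k:K)+1) * coeff (R := K) n (g ^ k * d⁄dX K g)
      = coeff (R := K) (n+1) (g ^ (k+1)) * ((n:K)+1) := by
    intro k
    have hd : d⁄dX K (g ^ (k+1)) = (k+1) • g ^ k • d⁄dX K g := by
      simpa using Derivation.leibniz_pow (D := d⁄dX K) (a := g) (k+1)
    have h2 := congrArg (PowerSeries.coeff (R := K) n) hd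
    rw [PowerSeries.coeff_derivative] at h2
    rw [h2, map_nsmul]
    push_cast
    simp [smul_eq_mul]
  rw [Finset.sum_mul, Finset.sum_range_succ', Finset.sum_mul, map_sum]
  have h0 : coeff (R := K) 0 f * coeff (R := K) (n+1) (g ^ 0) * ((n:K)+1) = 0 := by
    simp [PowerSeries.coeff_one]
  rw [h0, add_zero]
  refine Finset.sum_congr rfl fun k hk => ?_
  rw [mul_assoc (PowerSeries.C (R := K) _), PowerSeries.coeff_C_mul, PowerSeries.coeff_derivative]
  push_cast
  linear_combination (-(PowerSeries.coeff (R := K) (k+1) f)) * key k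
theorem derivative_exp_aux : d⁄dX K (exp K) = exp K := by
  ext n
  rw [PowerSeries.coeff_derivative, PowerSeries.coeff_exp, PowerSeries.coeff_exp]
  have hcast : ((n : K) + 1) = algebraMap ℚ K ((n : ℚ) + 1) := by
    push_cast
    simp
  rw [hcast, ← map_mul]
  congr 1
  rw [Nat.factorial_succ]
  have h1 : ((n+1 : ℕ) : ℚ) ≠ 0 := by positivity
  have h2 : ((n.factorial : ℕ) : ℚ) ≠ 0 := by
    exact_mod_cast Nat.cast_ne_zero.mpr n.factorial_ne_zero
  field_simp
  push_cast
  ring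

theorem pcomp_exp_add {f g : PowerSeries K} (hf : constantCoeff (R := K) f = 0)
    (hg : constantCoeff (R := K) g = 0) :
    pcomp (exp K) (f + g) = pcomp (exp K) f * pcomp (exp K) g := by
  set u := pcomp (exp K) (f + g) with hu_def
  set v := pcomp (exp K) f * pcomp (exp K) g with hv_def
  have hfg : constantCoeff (R := K) (f + g) = 0 := by rw [map_add, hf, hg, add_zero]
  have hcu : constantCoeff (R := K) u = 1 := by
    rw [hu_def, constantCoeff_pcomp, PowerSeries.constantCoeff_exp]
  have hcv : constantCoeff (R := K) v = 1 := by
    rw [hv_def, map_mul, constantCoeff_pcomp, constantCoeff_pcomp,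
      PowerSeries.constantCoeff_exp, one_mul]
  have hv0 : constantCoeff (R := K) v ≠ 0 := by rw [hcv]; exact one_ne_zero
  have hdu : d⁄dX K u = u * (d⁄dX K f + d⁄dX K g) := by
    rw [hu_def, derivative_pcomp hfg, derivative_exp_aux, Derivation.map_add]
  have hdv : d⁄dX K v = v * (d⁄dX K f + d⁄dX K g) := by
    rw [hv_def, Derivation.leibniz, smul_eq_mul, smul_eq_mul,
      derivative_pcomp hf, derivative_pcomp hg, derivative_exp_aux]
    ring
  have hvinv : v⁻¹ * v = 1 := PowerSeries.inv_mul_cancel v hv0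
  have hdvinv : d⁄dX K v⁻¹ = -v⁻¹ ^ 2 * d⁄dX K v := PowerSeries.derivative_inv' v
  have hw : u * v⁻¹ = 1 := by
    apply PowerSeries.derivative.ext
    · rw [Derivation.leibniz, smul_eq_mul, smul_eq_mul, hdvinv, hdu, hdv, Derivation.map_one_eq_zero]
      linear_combination (-(u * (d⁄dX K f + d⁄dX K g) * v⁻¹)) * hvinv
    · have hcvinv : constantCoeff (R := K) v⁻¹ = 1 := by
        have := congrArg (PowerSeries.constantCoeff (R := K)) hvinv
        rw [map_mul, map_one, hcv, mul_one] at this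
        exact this
      rw [map_mul, hcu, hcvinv, map_one, mul_one]
  calc u = u * (v⁻¹ * v) := by rw [hvinv, mul_one]
    _ = (u * v⁻¹) * v := by ring
    _ = v := by rw [hw, one_mul]

/-- The series `L = Σ_{n≥1} (-1)^{n+1} X^n / n`. -/
noncomputable def Lser : PowerSeries K :=
  PowerSeries.mk fun n => (-1 : K) ^ (n + 1) / (n : K)

theorem plog_eq (A : PowerSeries K) : plog A = pcomp Lser (A - 1) := rfl

theorem constantCoeff_Lser : constantCoeff (R := K) (Lser : PowerSeries K) = 0 := by
  rw [← coeff_zero_eq_constantCoeff, Lser, PowerSeries.coeff_mk]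
  simp

theorem constantCoeff_plog (A : PowerSeries K) : constantCoeff (R := K) (plog A) = 0 := by
  rw [plog_eq, constantCoeff_pcomp, constantCoeff_Lser]

theorem coeff_derivative_Lser (n : ℕ) :
    coeff (R := K) n (d⁄dX K (Lser : PowerSeries K)) = (-1 : K) ^ n := by
  rw [PowerSeries.coeff_derivative, Lser, PowerSeries.coeff_mk]
  have h1 : ((n : K) + 1) ≠ 0 := Nat.cast_add_one_ne_zero n
  push_cast
  field_simp
  ring

theorem one_add_X_mul_dLser :
    (1 + PowerSeries.X) * d⁄dX K (Lser : PowerSeries K) = 1 := by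
  ext n
  rw [add_mul, one_mul, map_add]
  cases n with
  | zero =>
    rw [coeff_derivative_Lser, PowerSeries.coeff_one]
    have : coeff (R := K) 0 (PowerSeries.X * d⁄dX K (Lser : PowerSeries K)) = 0 := by
      rw [coeff_zero_eq_constantCoeff, map_mul, PowerSeries.constantCoeff_X, zero_mul]
    rw [this]
    norm_num
  | succ m =>
    rw [coeff_derivative_Lser, PowerSeries.coeff_succ_X_mul, coeff_derivative_Lser,
      PowerSeries.coeff_one]
    simp [pow_succ]

theorem mul_pcomp_dLser {A : PowerSeries K} (hA : constantCoeff (R := K) A = 1) :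
    A * pcomp (d⁄dX K (Lser : PowerSeries K)) (A - 1) = 1 := by
  have hA0 : constantCoeff (R := K) (A - 1) = 0 := by rw [map_sub, hA, map_one, sub_self]
  have hArw : A = pcomp (1 + PowerSeries.X) (A - 1) := by
    rw [pcomp_add, pcomp_one, pcomp_X hA0]
    ring
  nth_rewrite 1 [hArw]
  rw [← pcomp_mul hA0, one_add_X_mul_dLser, pcomp_one]

theorem derivative_plog {A : PowerSeries K} (hA : constantCoeff (R := K) A = 1) :
    d⁄dX K (plog A) = pcomp (d⁄dX K (Lser : PowerSeries K)) (A - 1) * d⁄dX K A := by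
  have hA0 : constantCoeff (R := K) (A - 1) = 0 := by rw [map_sub, hA, map_one, sub_self]
  rw [plog_eq, derivative_pcomp hA0, map_sub, Derivation.map_one_eq_zero, sub_zero]
theorem plog_mul {A B : PowerSeries K} (hA : constantCoeff (R := K) A = 1)
    (hB : constantCoeff (R := K) B = 1) : plog (A * B) = plog A + plog B := by
  have hAB : constantCoeff (R := K) (A * B) = 1 := by rw [map_mul, hA, hB, mul_one]
  have hABne : A * B ≠ 0 := fun h => by
    rw [h, map_zero] at hAB
    exact zero_ne_one hAB
  apply PowerSeries.derivative.ext
  · rw [Derivation.map_add, derivative_plog hA, derivative_plog hB, derivative_plog hAB]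
    apply mul_left_cancel₀ hABne
    have hP := mul_pcomp_dLser hAB
    have hPA := mul_pcomp_dLser hA
    have hPB := mul_pcomp_dLser hB
    rw [Derivation.leibniz, smul_eq_mul, smul_eq_mul]
    linear_combination (A * d⁄dX K B + B * d⁄dX K A) * hP
      - (B * d⁄dX K A) * hPA - (A * d⁄dX K B) * hPB
  · rw [constantCoeff_plog, map_add, constantCoeff_plog, constantCoeff_plog, add_zero]

theorem plog_one : plog (1 : PowerSeries K) = 0 := by
  rw [plog_eq, sub_self, pcomp_zero_right, constantCoeff_Lser, map_zero]

theorem constantCoeff_ppow (τ : K) (A : PowerSeries K) :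
    constantCoeff (R := K) (ppow τ A) = 1 := by
  rw [ppow, constantCoeff_pcomp, PowerSeries.constantCoeff_exp]

theorem ppow_one_series (τ : K) : ppow τ (1 : PowerSeries K) = 1 := by
  rw [ppow, plog_one, smul_zero, pcomp_zero_right, PowerSeries.constantCoeff_exp, map_one]

theorem ppow_mul {A B : PowerSeries K} (τ : K) (hA : constantCoeff (R := K) A = 1)
    (hB : constantCoeff (R := K) B = 1) : ppow τ (A * B) = ppow τ A * ppow τ B := by
  have h1 : constantCoeff (R := K) (τ • plog A) = 0 := by
    rw [PowerSeries.constantCoeff_smul, constantCoeff_plog, smul_zero]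
  have h2 : constantCoeff (R := K) (τ • plog B) = 0 := by
    rw [PowerSeries.constantCoeff_smul, constantCoeff_plog, smul_zero]
  rw [ppow, ppow, ppow, plog_mul hA hB, smul_add, pcomp_exp_add h1 h2]

theorem pcomp_ppow {A g : PowerSeries K} (τ : K) (hA : constantCoeff (R := K) A = 1)
    (hg : constantCoeff (R := K) g = 0) :
    pcomp (ppow τ A) g = ppow τ (pcomp A g) := by
  have hA0 : constantCoeff (R := K) (A - 1) = 0 := by rw [map_sub, hA, map_one, sub_self]
  have hlog0 : constantCoeff (R := K) (τ • plog A) = 0 := by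
    rw [PowerSeries.constantCoeff_smul, constantCoeff_plog, smul_zero]
  have hplog : pcomp (plog A) g = plog (pcomp A g) := by
    rw [plog_eq, pcomp_assoc hA0 hg, plog_eq, pcomp_sub, pcomp_one]
  rw [ppow, pcomp_assoc hlog0 hg, pcomp_smul, hplog, ppow]
theorem coeff_pow_self {g : PowerSeries K} (hg : constantCoeff (R := K) g = 0) (n : ℕ) :
    coeff (R := K) n (g ^ n) = (coeff (R := K) 1 g) ^ n := by
  obtain ⟨h, rfl⟩ := PowerSeries.X_dvd_iff.mpr hg
  rw [mul_pow]
  have h1 : coeff (R := K) n ((PowerSeries.X : PowerSeries K) ^ n * h ^ n)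
      = constantCoeff (R := K) (h ^ n) := by
    have := PowerSeries.coeff_X_pow_mul (h ^ n) n 0
    simpa [coeff_zero_eq_constantCoeff] using this
  have h2 : coeff (R := K) 1 ((PowerSeries.X : PowerSeries K) * h) = constantCoeff (R := K) h := by
    have := PowerSeries.coeff_succ_X_mul 0 h
    simpa [coeff_zero_eq_constantCoeff] using this
  rw [h1, h2, map_pow]

/-- Coefficients of the compositional inverse of `α` (assuming `coeff 1 α = 1`). -/
noncomputable def bseq (α : PowerSeries K) (n : ℕ) : K :=
  (if n = 1 then 1 else 0) -
    ∑ k ∈ (Finset.range n).attach, bseq α k * PowerSeries.coeff (R := K) n (α ^ (k : ℕ))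
termination_by n
decreasing_by exact Finset.mem_range.mp k.2

theorem bseq_eq (α : PowerSeries K) (n : ℕ) :
    bseq α n = (if n = 1 then 1 else 0) -
      ∑ k ∈ Finset.range n, bseq α k * PowerSeries.coeff (R := K) n (α ^ k) := by
  rw [bseq, ← Finset.sum_attach (Finset.range n) (fun k => bseq α k * coeff (R := K) n (α ^ k))]

theorem pcomp_bseq {α : PowerSeries K} (hα : constantCoeff (R := K) α = 0)
    (h1 : coeff (R := K) 1 α = 1) :
    pcomp (PowerSeries.mk (bseq α)) α = PowerSeries.X := by
  ext n
  rw [coeff_pcomp, Finset.sum_range_succ, PowerSeries.coeff_mk, bseq_eq,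
    coeff_pow_self hα, h1, one_pow, mul_one, PowerSeries.coeff_X]
  simp only [PowerSeries.coeff_mk]
  ring

theorem constantCoeff_mk_bseq (α : PowerSeries K) :
    constantCoeff (R := K) (PowerSeries.mk (bseq α)) = 0 := by
  rw [← coeff_zero_eq_constantCoeff, PowerSeries.coeff_mk, bseq_eq]
  simp

theorem coeff_one_mk_bseq {α : PowerSeries K} (hα : constantCoeff (R := K) α = 0) :
    coeff (R := K) 1 (PowerSeries.mk (bseq α)) = 1 := by
  rw [PowerSeries.coeff_mk, bseq_eq]
  simp [PowerSeries.coeff_one]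

/-- Existence of a two-sided compositional inverse. -/
theorem exists_comp_inverse {α : PowerSeries K} (hα : constantCoeff (R := K) α = 0)
    (h1 : coeff (R := K) 1 α = 1) :
    ∃ β : PowerSeries K, constantCoeff (R := K) β = 0 ∧
      pcomp β α = PowerSeries.X ∧ pcomp α β = PowerSeries.X := by
  set β := PowerSeries.mk (bseq α) with hβ_def
  have hβ0 : constantCoeff (R := K) β = 0 := constantCoeff_mk_bseq α
  have hβα : pcomp β α = PowerSeries.X := pcomp_bseq hα h1
  have hβ1 : coeff (R := K) 1 β = 1 := coeff_one_mk_bseq hα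
  set γ := PowerSeries.mk (bseq β) with hγ_def
  have hγ0 : constantCoeff (R := K) γ = 0 := constantCoeff_mk_bseq β
  have hγβ : pcomp γ β = PowerSeries.X := pcomp_bseq hβ0 hβ1
  have hαγ : α = γ := by
    calc α = pcomp PowerSeries.X α := (pcomp_X hα).symm
      _ = pcomp (pcomp γ β) α := by rw [hγβ]
      _ = pcomp γ (pcomp β α) := pcomp_assoc hβ0 hα γ
      _ = pcomp γ PowerSeries.X := by rw [hβα]
      _ = γ := pcomp_X_right γ
  exact ⟨β, hβ0, hβα, by rw [hαγ, hγβ]⟩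
end SGaux

open SGaux

/-- For every `τ` in the base field, the set `𝒮𝒢(τ) = {(A, x·A^τ) : A ∈ 1 + xK[[x]]}`
is a subgroup of `𝒮ℐ = 𝒮𝒰 ⋊ 𝒮𝒟`: it contains the identity `(1, x)`, is closed under
the product `(A,α)(B,β) = (A·(B∘α), β∘α)`, and every element has a two-sided inverse
inside the set. -/
theorem SG_tau_subgroup {K : Type*} [Field K] [CharZero K] (τ : K) :
    (1, PowerSeries.X) ∈
        {p : PowerSeries K × PowerSeries K |
          ∃ A, PowerSeries.constantCoeff (R := K) A = 1 ∧ p = (A, PowerSeries.X * ppow τ A)} ∧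
    (∀ p ∈ {p : PowerSeries K × PowerSeries K |
          ∃ A, PowerSeries.constantCoeff (R := K) A = 1 ∧ p = (A, PowerSeries.X * ppow τ A)},
      ∀ q ∈ {p : PowerSeries K × PowerSeries K |
          ∃ A, PowerSeries.constantCoeff (R := K) A = 1 ∧ p = (A, PowerSeries.X * ppow τ A)},
      simul p q ∈ {p : PowerSeries K × PowerSeries K |
          ∃ A, PowerSeries.constantCoeff (R := K) A = 1 ∧ p = (A, PowerSeries.X * ppow τ A)}) ∧
    (∀ p ∈ {p : PowerSeries K × PowerSeries K |
          ∃ A, PowerSeries.constantCoeff (R := K) A = 1 ∧ p = (A, PowerSeries.X * ppow τ A)},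
      ∃ p' ∈ {p : PowerSeries K × PowerSeries K |
          ∃ A, PowerSeries.constantCoeff (R := K) A = 1 ∧ p = (A, PowerSeries.X * ppow τ A)},
        simul p p' = (1, PowerSeries.X) ∧ simul p' p = (1, PowerSeries.X)) := by
  refine ⟨⟨1, map_one _, by rw [ppow_one_series, mul_one]⟩, ?_, ?_⟩
  · -- closure
    rintro p ⟨A, hA, rfl⟩ q ⟨B, hB, rfl⟩
    set α := PowerSeries.X * ppow τ A with hα_def
    have hα0 : constantCoeff (R := K) α = 0 := by
      rw [hα_def, map_mul, PowerSeries.constantCoeff_X, zero_mul]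
    have hBα : constantCoeff (R := K) (pcomp B α) = 1 := by rw [constantCoeff_pcomp, hB]
    refine ⟨A * pcomp B α, by rw [map_mul, hA, hBα, mul_one], ?_⟩
    simp only [simul]
    refine Prod.ext rfl ?_
    show pcomp (PowerSeries.X * ppow τ B) α = PowerSeries.X * ppow τ (A * pcomp B α)
    rw [pcomp_mul hα0, pcomp_X hα0, pcomp_ppow τ hB hα0, ppow_mul τ hA hBα, hα_def]
    ring
  · -- inverses
    rintro p ⟨A, hA, rfl⟩
    set α := PowerSeries.X * ppow τ A with hα_def
    have hα0 : constantCoeff (R := K) α = 0 := by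
      rw [hα_def, map_mul, PowerSeries.constantCoeff_X, zero_mul]
    have hα1 : PowerSeries.coeff (R := K) 1 α = 1 := by
      rw [hα_def]
      have := PowerSeries.coeff_succ_X_mul 0 (ppow τ A) (R := K)
      rw [zero_add] at this
      rw [this, coeff_zero_eq_constantCoeff, constantCoeff_ppow]
    obtain ⟨β, hβ0, hβα, hαβ⟩ := exists_comp_inverse hα0 hα1
    set D := pcomp A β with hD_def
    have hD : constantCoeff (R := K) D = 1 := by rw [hD_def, constantCoeff_pcomp, hA]
    have hDne : constantCoeff (R := K) D ≠ 0 := by rw [hD]; exact one_ne_zero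
    set B := D⁻¹ with hB_def
    have hBD : B * D = 1 := PowerSeries.inv_mul_cancel D hDne
    have hB : constantCoeff (R := K) B = 1 := by
      have h := congrArg (constantCoeff (R := K)) hBD
      rw [map_mul, hD, mul_one, map_one] at h
      exact h
    have e1 : β * ppow τ D = PowerSeries.X := by
      rw [← hαβ, hα_def, pcomp_mul hβ0, pcomp_X hβ0, pcomp_ppow τ hA hβ0, hD_def]
    have e2 : ppow τ D * ppow τ B = 1 := by
      rw [← ppow_mul τ hD hB, show D * B = 1 by rw [mul_comm]; exact hBD, ppow_one_series]
    have hβ_eq : β = PowerSeries.X * ppow τ B := by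
      calc β = β * (ppow τ D * ppow τ B) := by rw [e2, mul_one]
        _ = (β * ppow τ D) * ppow τ B := by ring
        _ = PowerSeries.X * ppow τ B := by rw [e1]
    have hDα : pcomp D α = A := by
      rw [hD_def, pcomp_assoc hβ0 hα0, hβα, pcomp_X_right]
    have hfirst : A * pcomp B α = 1 := by
      rw [mul_comm, ← hDα, ← pcomp_mul hα0, hBD, pcomp_one]
    refine ⟨(B, β), ⟨B, hB, by rw [hβ_eq]⟩, ?_, ?_⟩
    · simp only [simul]
      exact Prod.ext hfirst hβα
    · simp only [simul]
      exact Prod.ext (by rw [← hD_def]; exact hBD) hαβ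
end
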